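/- arXiv:2201.11505 — 3 statements merged into one kernel-verified Lean document; each statement's English description precedes it below -/
import Mathlib

section
/- Let G be a pentagraph that has an induced subgraph isomorphic to the Petersen graph. Then either G is isomorphic to the Petersen graph, or G admits a clique cutset. -/
open SimpleGraph

variable {V : Type*}

/-- A walk is an *induced (chordless) path* if it is a path and every edge of `G` joining
two of its vertices is an edge of the path. -/
def IsIndPath (G : SimpleGraph V) {u v : V} (p : G.Walk u v) : Prop :=
  p.IsPath ∧ ∀ x ∈ p.support, ∀ y ∈ p.support, G.Adj x y → s(x, y) ∈ p.edges

/-- The interior (set of internal vertices) of a walk from `u` to `v`. -/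
def interiorSet {G : SimpleGraph V} {u v : V} (p : G.Walk u v) : Set V :=
  {x | x ∈ p.support ∧ x ≠ u ∧ x ≠ v}

/-- An *induced cycle*: a cycle such that every edge of `G` joining two of its vertices is an
edge of the cycle. -/
def IsIndCycle (G : SimpleGraph V) {u : V} (c : G.Walk u u) : Prop :=
  c.IsCycle ∧ ∀ x ∈ c.support, ∀ y ∈ c.support, G.Adj x y → s(x, y) ∈ c.edges

/-- A *pentagraph*: every cycle has length at least five, and every induced cycle of odd
length has length exactly five. -/
def IsPentagraph (G : SimpleGraph V) : Prop :=
  (∀ (u : V) (c : G.Walk u u), c.IsCycle → 5 ≤ c.length) ∧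
  (∀ (u : V) (c : G.Walk u u), IsIndCycle G c → Odd c.length → c.length = 5)

/-- Removing the vertex set `X` disconnects `G`: two vertices outside `X` are not joined by
any path avoiding `X`. -/
def RemovalDisconnects (G : SimpleGraph V) (X : Set V) : Prop :=
  ∃ a b : ↥(Xᶜ), ¬ (G.induce Xᶜ).Reachable a b

/-- `G` admits a `P₃`-cutset: an induced three-vertex path whose deletion disconnects `G`. -/
def HasP3Cutset (G : SimpleGraph V) : Prop :=
  ∃ v₁ v₂ v₃ : V, G.Adj v₁ v₂ ∧ G.Adj v₂ v₃ ∧ ¬ G.Adj v₁ v₃ ∧ v₁ ≠ v₃ ∧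
    RemovalDisconnects G ({v₁, v₂, v₃} : Set V)

/-- `A` is (the vertex set of) a connected component of `G ∖ X`. -/
def IsCompOf (G : SimpleGraph V) (X : Set V) (A : Set V) : Prop :=
  A.Nonempty ∧ A ⊆ Xᶜ ∧ (G.induce A).Connected ∧
    ∀ u ∈ A, ∀ w ∈ Xᶜ, G.Adj u w → w ∈ A

/-- `G` admits a strong parity star-cutset. -/
def HasStrongParityStarCutset (G : SimpleGraph V) : Prop :=
  ∃ X : Set V, RemovalDisconnects G X ∧
    ∃ x ∈ X, (∀ y ∈ X, y ≠ x → G.Adj x y) ∧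
      ∃ A : Set V, IsCompOf G X A ∧
        (∀ y ∈ X, y ≠ x → ∀ z ∈ X, z ≠ x → y ≠ z →
          ∃ p : G.Walk y z, IsIndPath G p ∧ Even p.length ∧ interiorSet p ⊆ A) ∧
        (∃ a ∈ A, G.Adj x a)

/-- `G` admits a clique cutset. -/
def HasCliqueCutset (G : SimpleGraph V) : Prop :=
  ∃ X : Set V, G.IsClique X ∧ RemovalDisconnects G X

/-- Vertices of the Petersen graph: 2-element subsets of a 5-element set. -/
abbrev KVert : Type := {s : Finset (Fin 5) // s.card = 2}

/-- The Petersen graph, as the Kneser graph on 2-element subsets of a 5-element set. -/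
def petersen : SimpleGraph KVert where
  Adj a b := Disjoint (a : Finset (Fin 5)) (b : Finset (Fin 5))
  symm := ⟨fun a b h => h.symm⟩
  loopless := by
    constructor
    intro a h
    rw [disjoint_self] at h
    have h2 := a.2
    simp [h] at h2

def pA : KVert := ⟨{0, 1}, by decide⟩
def pB : KVert := ⟨{2, 3}, by decide⟩

/-- The Petersen graph minus one edge. -/
def petersen0 : SimpleGraph KVert := petersen.deleteEdges {s(pA, pB)}

/-- The Petersen graph minus one vertex. -/
def petersen1 : SimpleGraph {x : KVert // x ≠ pA} := petersen.induce {x : KVert | x ≠ pA}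

/-- The Petersen graph minus two adjacent vertices. -/
def petersen2 : SimpleGraph {x : KVert // x ≠ pA ∧ x ≠ pB} :=
  petersen.induce {x : KVert | x ≠ pA ∧ x ≠ pB}

/-- Two nonadjacent vertices are *linked*: joined by two induced paths, both of length at
least three, of different parity. -/
def Linked (H : SimpleGraph V) (s t : V) : Prop :=
  ∃ (p q : H.Walk s t), IsIndPath H p ∧ IsIndPath H q ∧
    3 ≤ p.length ∧ 3 ≤ q.length ∧ p.length % 2 ≠ q.length % 2

/-- Two vertices are *odd-linked*: joined by an induced path of odd length at least five. -/
def OddLinked (H : SimpleGraph V) (s t : V) : Prop :=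
  ∃ p : H.Walk s t, IsIndPath H p ∧ Odd p.length ∧ 5 ≤ p.length

/-- A *jump* over a hole with vertex set `C`: an induced path whose ends are distinct,
nonadjacent vertices of `C` and whose other vertices avoid `C`. -/
def IsJump (G : SimpleGraph V) (C : Set V) {s t : V} (P : G.Walk s t) : Prop :=
  IsIndPath G P ∧ s ∈ C ∧ t ∈ C ∧ s ≠ t ∧ ¬ G.Adj s t ∧
    ∀ x ∈ P.support, x ∈ C → x = s ∨ x = t

/-- A jump *across* the vertex `c` of `C`. -/
def IsJumpAcross (G : SimpleGraph V) (C : Set V) {s t : V} (P : G.Walk s t) (c : V) : Prop :=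
  IsJump G C P ∧ c ∈ C ∧ G.Adj c s ∧ G.Adj c t

/-- A *local* jump: no vertex of `C` other than `c, s, t` has a neighbour in the interior. -/
def IsLocalJump (G : SimpleGraph V) (C : Set V) {s t : V} (P : G.Walk s t) : Prop :=
  IsJump G C P ∧ ∃ c : V, c ∈ C ∧ G.Adj c s ∧ G.Adj c t ∧
    ∀ x ∈ C, x ≠ c → x ≠ s → x ≠ t → ∀ y ∈ interiorSet P, ¬ G.Adj x y

/-- A *short* jump: a jump of length three. -/
def IsShortJump (G : SimpleGraph V) (C : Set V) {s t : V} (P : G.Walk s t) : Prop :=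
  IsJump G C P ∧ P.length = 3

/-- `G` is three-connected. -/
def ThreeConnected (G : SimpleGraph V) : Prop :=
  4 ≤ Nat.card V ∧ ∀ S : Set V, S.ncard < 3 → (G.induce Sᶜ).Connected

/-!
If the embedded Petersen graph `P` is not all of `G`, pick a vertex `v` outside it and let `N` be
the set of vertices of `P` with a neighbour in the component of `G - P` containing `v`; it suffices
that `N` is a clique, since then it separates `v` from the rest of `P`. Otherwise some path through
`G - P` joins two distinct nonadjacent vertices of `P`, and a shortest such path `Q` is a jump.
Since `G` has girth at least five, each vertex outside `P` sees at most one vertex of `P`, so `Q`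
has length at least three, and by minimality the interior of `Q` sees in `P` only the ends of `Q`
and their common neighbour. Closing `Q` by an induced path of the Petersen graph of length three or
four (which cannot pass through that common neighbour), chosen to make the total length odd,
therefore gives an odd induced cycle of length at least six.
-/

section

variable {W : Type*} {G : SimpleGraph V} {u v : V}

lemma IsIndPath.reverse {p : G.Walk u v} (hp : IsIndPath G p) : IsIndPath G p.reverse := by
  refine ⟨hp.1.reverse, fun x hx y hy hxy => ?_⟩
  rw [Walk.support_reverse, List.mem_reverse] at hx hy
  simpa [Walk.edges_reverse] using hp.2 x hx y hy hxy

lemma IsIndPath.map {G' : SimpleGraph W} (f : G ↪g G') {p : G.Walk u v} (hp : IsIndPath G p) :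
    IsIndPath G' (p.map f.toHom) := by
  refine ⟨hp.1.map f.injective, ?_⟩
  simp only [Walk.support_map, Walk.edges_map, List.mem_map]
  rintro _ ⟨x, hx, rfl⟩ _ ⟨y, hy, rfl⟩ hxy
  exact ⟨s(x, y), hp.2 x hx y hy (f.map_adj_iff.mp hxy), rfl⟩

lemma isIndPath_nil : IsIndPath G (Walk.nil : G.Walk u u) :=
  ⟨Walk.IsPath.nil, by simp⟩

lemma isIndPath_cons_iff {w : V} (h : G.Adj u v) (p : G.Walk v w) :
    IsIndPath G (Walk.cons h p) ↔
      IsIndPath G p ∧ u ∉ p.support ∧ ∀ y ∈ p.support, G.Adj u y → y = v := by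
  simp only [IsIndPath, Walk.cons_isPath_iff, Walk.support_cons, Walk.edges_cons, List.mem_cons]
  constructor
  · rintro ⟨⟨hp, hu⟩, hind⟩
    refine ⟨⟨hp, fun x hx y hy hxy => ?_⟩, hu, fun y hy huy => ?_⟩
    · refine (hind x (.inr hx) y (.inr hy) hxy).resolve_left fun he => ?_
      rcases Sym2.eq_iff.mp he with ⟨rfl, -⟩ | ⟨-, rfl⟩ <;> contradiction
    · rcases hind u (.inl rfl) y (.inr hy) huy with he | he
      · exact Sym2.congr_right.mp he
      · exact absurd (p.fst_mem_support_of_mem_edges he) hu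
  · rintro ⟨⟨hp, hind⟩, hu, hv⟩
    refine ⟨⟨hp, hu⟩, ?_⟩
    rintro x (rfl | hx) y (rfl | hy) hxy
    · exact absurd rfl hxy.ne
    · exact .inl (by rw [hv y hy hxy])
    · exact .inl (by rw [hv x hx hxy.symm, Sym2.eq_swap])
    · exact .inr (hind x hx y hy hxy)

lemma IsIndPath.isIndCycle_append {p : G.Walk u v} {q : G.Walk v u} (hp : IsIndPath G p)
    (hq : IsIndPath G q) (hdisj : p.support.tail.Disjoint q.support.tail)
    (hlen : 1 < p.length ∨ 1 < q.length)
    (hcross : ∀ x ∈ p.support, ∀ y ∈ q.support, G.Adj x y → x ∈ q.support ∨ y ∈ p.support) :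
    IsIndCycle G (p.append q) := by
  refine ⟨hp.1.isCycle_append hq.1 hdisj hlen, fun x hx y hy hxy => ?_⟩
  rw [Walk.edges_append, List.mem_append]
  rw [Walk.mem_support_append_iff] at hx hy
  rcases hx with hx | hx <;> rcases hy with hy | hy
  · exact .inl (hp.2 x hx y hy hxy)
  · rcases hcross x hx y hy hxy with hx' | hy'
    · exact .inr (hq.2 x hx' y hy hxy)
    · exact .inl (hp.2 x hx y hy' hxy)
  · rcases hcross y hy x hx hxy.symm with hy' | hx'
    · exact .inr (hq.2 x hx y hy' hxy)
    · exact .inl (hp.2 x hx' y hy hxy)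
  · exact .inr (hq.2 x hx y hy hxy)

lemma mem_edges_of_forall_length_le {T : Set V} {x y : V} (a : G.Walk u x) (b : G.Walk x y)
    (c : G.Walk y v) (hT : ∀ z ∈ (a.append (b.append c)).support, z ∈ T)
    (hmin : ∀ q : G.Walk u v, (∀ z ∈ q.support, z ∈ T) → (a.append (b.append c)).length ≤ q.length)
    (hxy : G.Adj x y) : s(x, y) ∈ b.edges := by
  have hle := hmin (a.append (.cons hxy c)) fun z hz => by
    simp only [Walk.mem_support_append_iff, Walk.support_cons, List.mem_cons] at hz hT
    rcases hz with hz | rfl | hz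
    · exact hT z (.inl hz)
    · exact hT z (.inl a.end_mem_support)
    · exact hT z (.inr (.inr hz))
  simp only [Walk.length_append, Walk.length_cons] at hle
  cases b with
  | nil => exact absurd rfl hxy.ne
  | cons h b =>
    cases b with
    | nil => simp
    | cons h' b => simp at hle; omega

lemma IsIndPath.of_forall_length_le {T : Set V} {p : G.Walk u v} (hT : ∀ x ∈ p.support, x ∈ T)
    (hmin : ∀ q : G.Walk u v, (∀ x ∈ q.support, x ∈ T) → p.length ≤ q.length) :
    IsIndPath G p := by
  classical
  refine ⟨?_, fun x hx y hy hxy => ?_⟩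
  · rw [← p.bypass_eq_self_of_length_le_length_bypass
      (hmin _ fun x hx => hT x (p.support_bypass_subset_support hx))]
    exact p.bypass_isPath
  obtain ⟨q₁, q₂, rfl⟩ := p.mem_support_iff_exists_append.mp hx
  rcases (Walk.mem_support_append_iff _ _).mp hy with hy | hy
  · obtain ⟨r₁, r₂, rfl⟩ := q₁.mem_support_iff_exists_append.mp hy
    rw [← Walk.append_assoc] at hT hmin
    have := mem_edges_of_forall_length_le r₁ r₂ q₂ hT hmin hxy.symm
    rw [Sym2.eq_swap] at this
    simp [Walk.edges_append, this]
  · obtain ⟨r₁, r₂, rfl⟩ := q₂.mem_support_iff_exists_append.mp hy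
    have := mem_edges_of_forall_length_le q₁ r₁ r₂ hT hmin hxy
    simp [Walk.edges_append, this]

lemma exists_isIndPath_le_length (T : Set V) (p : G.Walk u v) (hT : ∀ x ∈ p.support, x ∈ T) :
    ∃ q : G.Walk u v, IsIndPath G q ∧ (∀ x ∈ q.support, x ∈ T) ∧ q.length ≤ p.length := by
  classical
  have hex : ∃ n, ∃ q : G.Walk u v, (∀ x ∈ q.support, x ∈ T) ∧ q.length = n := ⟨_, p, hT, rfl⟩
  obtain ⟨q, hqT, hq⟩ := Nat.find_spec hex
  exact ⟨q, .of_forall_length_le hqT fun q' hq' => hq ▸ Nat.find_min' hex ⟨q', hq', rfl⟩, hqT,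
    hq ▸ Nat.find_min' hex ⟨p, hT, rfl⟩⟩

section Jump

variable {C : Set V} {s t : V}

lemma IsJump.reverse {P : G.Walk s t} (hP : IsJump G C P) : IsJump G C P.reverse := by
  obtain ⟨hind, hs, ht, hst, hadj, hC⟩ := hP
  refine ⟨hind.reverse, ht, hs, hst.symm, fun h => hadj h.symm, fun x hx hxC => ?_⟩
  rw [Walk.support_reverse, List.mem_reverse] at hx
  exact (hC x hx hxC).symm

lemma exists_isJump_le_length (w : G.Walk s t) (hs : s ∈ C) (ht : t ∈ C) (hst : s ≠ t)
    (hadj : ¬ G.Adj s t) (hw : ∀ x ∈ w.support, x ∈ C → x = s ∨ x = t) :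
    ∃ P : G.Walk s t, IsJump G C P ∧ P.length ≤ w.length := by
  obtain ⟨P, hP, hPC, hle⟩ := exists_isIndPath_le_length {x | x ∈ C → x = s ∨ x = t} w hw
  exact ⟨P, ⟨hP, hs, ht, hst, hadj, hPC⟩, hle⟩

lemma IsJump.eq_or_adj_start_of_minimal {P : G.Walk s t} (hP : IsJump G C P)
    (hmin : ∀ s' t' (Q : G.Walk s' t'), IsJump G C Q → P.length ≤ Q.length) {x y : V}
    (hx : x ∈ P.support) (hxC : x ∉ C) (hxt : ¬ G.Adj x t) (hy : y ∈ C) (hxy : G.Adj x y) :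
    y = s ∨ G.Adj y s := by
  have ⟨hPind, hs, ht, _, _, hPC⟩ := hP
  obtain ⟨q₁, q₂, rfl⟩ := P.mem_support_iff_exists_append.mp hx
  have hxt' : x ≠ t := fun h => hxC (h ▸ ht)
  have hq₂ : 2 ≤ q₂.length := by
    have h0 : q₂.length ≠ 0 := fun h => hxt' (Walk.eq_of_length_eq_zero h)
    have h1 : q₂.length ≠ 1 := fun h => hxt (Walk.adj_of_length_eq_one h)
    omega
  have htq₁ : t ∉ q₁.support := fun h =>
    hPind.1.ne_of_mem_support_of_append hxt'.symm h q₂.end_mem_support rfl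
  -- otherwise the walk `s ⋯ x y` contains a jump shorter than `P`
  by_contra! hys
  obtain ⟨Q, hQ, hQlen⟩ := exists_isJump_le_length (q₁.concat hxy) hs hy (Ne.symm hys.1)
    (fun h => hys.2 h.symm) fun z hz hzC => by
      rw [Walk.support_concat, List.mem_append, List.mem_singleton] at hz
      rcases hz with hz | rfl
      · refine .inl ((hPC z ?_ hzC).resolve_right ?_)
        · exact (Walk.mem_support_append_iff _ _).mpr (.inl hz)
        · rintro rfl; exact htq₁ hz
      · exact .inr rfl
  have := hmin _ _ Q hQ
  simp only [Walk.length_append, Walk.length_concat] at this hQlen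
  omega

variable (hC : ∀ x ∉ C, ∀ y ∈ C, ∀ z ∈ C, G.Adj x y → G.Adj x z → y = z)
include hC

lemma IsJump.three_le_length {P : G.Walk s t} (hP : IsJump G C P) : 3 ≤ P.length := by
  obtain ⟨-, hs, ht, hst, hadj, hPC⟩ := hP
  have h0 : P.length ≠ 0 := fun h => hst (Walk.eq_of_length_eq_zero h)
  have h1 : P.length ≠ 1 := fun h => hadj (Walk.adj_of_length_eq_one h)
  have h2 : P.length ≠ 2 := fun h => by
    have hsx : G.Adj s (P.getVert 1) := by simpa using P.adj_getVert_succ (i := 0) (by omega)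
    have hxt : G.Adj (P.getVert 1) t := by
      simpa [← h, Walk.getVert_length] using P.adj_getVert_succ (i := 1) (by omega)
    have hxC : P.getVert 1 ∉ C := fun hxC =>
      (hPC _ (P.getVert_mem_support 1) hxC).elim hsx.ne' hxt.ne
    exact hst (hC _ hxC s hs t ht hsx.symm hxt)
  omega

lemma IsJump.eq_or_eq_or_adj_adj_of_minimal {P : G.Walk s t} (hP : IsJump G C P)
    (hmin : ∀ s' t' (Q : G.Walk s' t'), IsJump G C Q → P.length ≤ Q.length) {x y : V}
    (hx : x ∈ P.support) (hxC : x ∉ C) (hy : y ∈ C) (hxy : G.Adj x y) :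
    y = s ∨ y = t ∨ (G.Adj y s ∧ G.Adj y t) := by
  have ⟨_, hsC, htC, hst, hadj, _⟩ := hP
  by_cases hxs : G.Adj x s
  · exact .inl (hC x hxC y hy s hsC hxy hxs)
  by_cases hxt : G.Adj x t
  · exact .inr (.inl (hC x hxC y hy t htC hxy hxt))
  have hs := hP.eq_or_adj_start_of_minimal hmin hx hxC hxt hy hxy
  have ht := hP.reverse.eq_or_adj_start_of_minimal (by simpa using hmin) (by simpa using hx)
    hxC hxs hy hxy
  rcases hs with rfl | hs
  · exact (ht.elim hst hadj).elim
  · rcases ht with rfl | ht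
    · exact (hadj hs.symm).elim
    · exact .inr (.inr ⟨hs, ht⟩)

lemma IsJump.isIndCycle_append_of_minimal {P : G.Walk s t} (hP : IsJump G C P)
    (hmin : ∀ s' t' (Q : G.Walk s' t'), IsJump G C Q → P.length ≤ Q.length) {R : G.Walk t s}
    (hR : IsIndPath G R) (hRC : ∀ z ∈ R.support, z ∈ C)
    (hRst : ∀ z ∈ R.support, ¬ (G.Adj z s ∧ G.Adj z t)) :
    IsIndCycle G (P.append R) := by
  have ⟨hPind, _, _, _, _, hPC⟩ := hP
  have hPs : s ∉ P.support.tail := by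
    have := hPind.1.support_nodup
    rw [← Walk.cons_tail_support] at this
    exact (List.nodup_cons.mp this).1
  have hRt : t ∉ R.support.tail := by
    have := hR.1.support_nodup
    rw [← Walk.cons_tail_support] at this
    exact (List.nodup_cons.mp this).1
  refine hPind.isIndCycle_append hR (fun z hzP hzR => ?_)
    (.inl (by have := hP.three_le_length hC; omega)) (fun x hx y hy hxy => ?_)
  · rcases hPC z (List.mem_of_mem_tail hzP) (hRC z (List.mem_of_mem_tail hzR)) with rfl | rfl
    · exact hPs hzP
    · exact hRt hzR
  · by_cases hxC : x ∈ C
    · rcases hPC x hx hxC with rfl | rfl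
      · exact .inl R.end_mem_support
      · exact .inl R.start_mem_support
    · rcases hP.eq_or_eq_or_adj_adj_of_minimal hC hmin hx hxC (hRC y hy) hxy with rfl | rfl | hst
      · exact .inr P.start_mem_support
      · exact .inr P.end_mem_support
      · exact absurd hst (hRst y hy)

end Jump

lemma IsPentagraph.not_adj_of_adj_of_adj (hG : IsPentagraph G) {a b c : V} (hab : G.Adj a b)
    (hbc : G.Adj b c) : ¬ G.Adj c a := fun hca => by
  have := hG.1 a (.cons hab (.cons hbc (.cons hca .nil))) (by
    have := hab.ne; have := hbc.ne; have := hca.ne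
    simp [Walk.cons_isCycle_iff]; tauto)
  simp at this

lemma IsPentagraph.eq_of_adj_of_adj_of_adj_of_adj (hG : IsPentagraph G) {a b c d : V}
    (hab : G.Adj a b) (hbc : G.Adj b c) (hcd : G.Adj c d) (hda : G.Adj d a) (hac : a ≠ c) :
    b = d := by
  by_contra hbd
  have := hG.1 a (.cons hab (.cons hbc (.cons hcd (.cons hda .nil)))) (by
    have := hab.ne; have := hbc.ne; have := hcd.ne; have := hda.ne
    simp [Walk.cons_isCycle_iff]; tauto)
  simp at this

instance : DecidableRel petersen.Adj := fun a b =>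
  inferInstanceAs (Decidable (Disjoint (a : Finset (Fin 5)) b))

set_option synthInstance.maxSize 2000 in
lemma petersen_adj_or_exists_adj_adj :
    ∀ a b : KVert, a ≠ b → petersen.Adj a b ∨ ∃ c, petersen.Adj a c ∧ petersen.Adj c b := by
  decide

set_option synthInstance.maxSize 2000 in
lemma petersen_exists_path_three : ∀ s t : KVert, s ≠ t → ¬ petersen.Adj s t →
    ∃ a b, petersen.Adj t a ∧ petersen.Adj a b ∧ petersen.Adj b s ∧
      ¬ petersen.Adj t b ∧ ¬ petersen.Adj a s ∧ t ≠ b ∧ a ≠ s := by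
  decide

set_option synthInstance.maxSize 2000 in
lemma petersen_exists_path_four : ∀ s t : KVert, s ≠ t → ¬ petersen.Adj s t →
    ∃ a b c, petersen.Adj t a ∧ petersen.Adj a b ∧ petersen.Adj b c ∧ petersen.Adj c s ∧
      ¬ petersen.Adj t b ∧ ¬ petersen.Adj t c ∧ ¬ petersen.Adj a c ∧ ¬ petersen.Adj a s ∧
      ¬ petersen.Adj b s ∧ t ≠ b ∧ t ≠ c ∧ a ≠ c ∧ a ≠ s ∧ b ≠ s := by
  decide

lemma petersen_exists_isIndPath (s t : KVert) (hst : s ≠ t) (hadj : ¬ petersen.Adj s t) (n : ℕ) :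
    ∃ R : petersen.Walk t s, IsIndPath petersen R ∧ 3 ≤ R.length ∧ Odd (n + R.length) ∧
      ∀ z ∈ R.support, ¬ (petersen.Adj z s ∧ petersen.Adj z t) := by
  have hts : ¬ petersen.Adj t s := fun h => hadj h.symm
  rcases Nat.even_or_odd n with hn | hn
  · obtain ⟨a, b, hta, hab, hbs, htb, has, htb', has'⟩ := petersen_exists_path_three s t hst hadj
    have hbt : ¬ petersen.Adj b t := fun h => htb h.symm
    have := hta.ne; have := hab.ne; have := hbs.ne
    refine ⟨.cons hta (.cons hab (.cons hbs .nil)), ?_, by simp, ?_, ?_⟩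
    · simp [isIndPath_cons_iff, isIndPath_nil]
      tauto
    · simpa using hn.add_odd (by decide)
    · simp
      tauto
  · obtain ⟨a, b, c, hta, hab, hbc, hcs, htb, htc, hac, has, hbs, htb', htc', hac', has', hbs'⟩ :=
      petersen_exists_path_four s t hst hadj
    have hct : ¬ petersen.Adj c t := fun h => htc h.symm
    have := hta.ne; have := hab.ne; have := hbc.ne; have := hcs.ne
    refine ⟨.cons hta (.cons hab (.cons hbc (.cons hcs .nil))), ?_, by simp, ?_, ?_⟩
    · simp [isIndPath_cons_iff, isIndPath_nil]
      tauto
    · simpa using hn.add_even (by decide)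
    · simp
      tauto

lemma IsPentagraph.eq_of_adj_of_adj_of_notMem_range (hG : IsPentagraph G) (η : petersen ↪g G)
    {x : V} (hx : x ∉ Set.range η) {y z : V} (hy : y ∈ Set.range η) (hz : z ∈ Set.range η)
    (hxy : G.Adj x y) (hxz : G.Adj x z) : y = z := by
  obtain ⟨b, rfl⟩ := hy
  obtain ⟨c, rfl⟩ := hz
  by_contra hne
  rcases petersen_adj_or_exists_adj_adj b c (fun h => hne (congrArg η h)) with hbc | ⟨d, hbd, hdc⟩
  · exact hG.not_adj_of_adj_of_adj hxy (η.map_adj_iff.mpr hbc) hxz.symm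
  · exact hne (hG.eq_of_adj_of_adj_of_adj_of_adj hxy (η.map_adj_iff.mpr hbd)
      (η.map_adj_iff.mpr hdc) hxz.symm fun h => hx ⟨d, h.symm⟩)

theorem IsPentagraph.not_isJump_range (hG : IsPentagraph G) (η : petersen ↪g G) {s t : V}
    (P : G.Walk s t) : ¬ IsJump G (Set.range η) P := by
  have hC : ∀ x ∉ Set.range η, ∀ y ∈ Set.range η, ∀ z ∈ Set.range η, G.Adj x y → G.Adj x z →
      y = z := fun x hx y hy z hz => hG.eq_of_adj_of_adj_of_notMem_range η hx hy hz
  suffices ∀ n s t (P : G.Walk s t), IsJump G (Set.range η) P → P.length = n → False from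
    fun hP => this _ s t P hP rfl
  intro n
  induction n using Nat.strong_induction_on with
  | _ n ih =>
  intro s t P hP hn
  have hmin : ∀ s' t' (Q : G.Walk s' t'), IsJump G (Set.range η) Q → P.length ≤ Q.length :=
    fun s' t' Q hQ => not_lt.mp fun hlt => ih _ (hn ▸ hlt) s' t' Q hQ rfl
  have ⟨_, ⟨s, hs⟩, ⟨t, ht⟩, hst, hadj, _⟩ := hP
  subst hs ht
  obtain ⟨R, hR, hR3, hodd, hRst⟩ := petersen_exists_isIndPath s t
    (fun h => hst (congrArg η h)) (fun h => hadj (η.map_adj_iff.mpr h)) P.length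
  have hcyc := hP.isIndCycle_append_of_minimal hC hmin (hR.map η)
    (fun z hz => by
      obtain ⟨a, -, rfl⟩ := List.mem_map.mp (R.support_map _ ▸ hz)
      exact ⟨a, rfl⟩)
    (fun z hz => by
      obtain ⟨a, ha, rfl⟩ := List.mem_map.mp (R.support_map _ ▸ hz)
      exact fun h => hRst a ha ⟨η.map_adj_iff.mp h.1, η.map_adj_iff.mp h.2⟩)
  have h5 := hG.2 _ _ hcyc (by simpa using hodd)
  have := hP.three_le_length hC
  simp at h5
  omega

/-- The vertices of `C` adjacent to the component of `G - C` containing `v`, described as the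
ends of walks from `v` that meet `C` only at their end. -/
def attachments (G : SimpleGraph V) (C : Set V) (v : V) : Set V :=
  {y | y ∈ C ∧ ∃ w : G.Walk v y, ∀ z ∈ w.support, z ∈ C → z = y}

lemma isClique_attachments {C : Set V} (hJ : ∀ s t (P : G.Walk s t), ¬ IsJump G C P) :
    G.IsClique (attachments G C v) := by
  rintro y₁ ⟨hy₁, w₁, hw₁⟩ y₂ ⟨hy₂, w₂, hw₂⟩ hne
  by_contra hadj
  obtain ⟨P, hP, -⟩ := exists_isJump_le_length (w₁.reverse.append w₂) hy₁ hy₂ hne hadj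
    fun z hz hzC => by
      rw [Walk.mem_support_append_iff, Walk.support_reverse, List.mem_reverse] at hz
      exact hz.imp (hw₁ z · hzC) (hw₂ z · hzC)
  exact hJ _ _ P hP

lemma removalDisconnects_attachments {C : Set V} (hv : v ∉ C) {r : V} (hr : r ∈ C)
    (hrN : r ∉ attachments G C v) : RemovalDisconnects G (attachments G C v) := by
  set N := attachments G C v
  have step : ∀ {a b : V}, (∃ w : G.Walk v a, ∀ z ∈ w.support, z ∉ C) → G.Adj a b → b ∉ N →
      ∃ w : G.Walk v b, ∀ z ∈ w.support, z ∉ C := by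
    rintro a b ⟨w, hw⟩ hab hbN
    have hsupp : ∀ z ∈ (w.concat hab).support, z ∈ w.support ∨ z = b := by
      simp [Walk.support_concat]
    refine ⟨w.concat hab, fun z hz hzC => ?_⟩
    rcases hsupp z hz with hz | rfl
    · exact hw z hz hzC
    · exact hbN ⟨hzC, w.concat hab, fun z' hz' hz'C => (hsupp z' hz').resolve_left (hw z' · hz'C)⟩
  refine ⟨⟨v, fun h => hv h.1⟩, ⟨r, hrN⟩, fun ⟨p⟩ => ?_⟩
  suffices ∀ {a b : ↥Nᶜ}, (G.induce Nᶜ).Walk a b → (∃ w : G.Walk v a, ∀ z ∈ w.support, z ∉ C) →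
      ∃ w : G.Walk v b, ∀ z ∈ w.support, z ∉ C by
    obtain ⟨w, hw⟩ := this p ⟨.nil, by simpa using hv⟩
    exact hw r w.end_mem_support hr
  intro a b p
  induction p with
  | nil => exact id
  | @cons a b c h p ih => exact fun ha => ih (step ha h b.2)

end

theorem pentagraph_contains_petersen_general {V : Type*} (G : SimpleGraph V)
    (hG : IsPentagraph G) (h : Nonempty (petersen ↪g G)) :
    Nonempty (G ≃g petersen) ∨ HasCliqueCutset G := by
  obtain ⟨η⟩ := h
  by_cases hsurj : Function.Surjective η
  · exact .inl ⟨(RelIso.ofSurjective η hsurj).symm⟩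
  obtain ⟨v, hv⟩ := not_forall.mp hsurj
  have hclique := isClique_attachments (v := v) fun _ _ P => hG.not_isJump_range η P
  obtain ⟨r, hr, hrN⟩ : ∃ r ∈ Set.range η, r ∉ attachments G (Set.range η) v := by
    by_contra! hall
    let b : KVert := ⟨{0, 2}, rfl⟩
    have hab := hclique (hall _ ⟨pA, rfl⟩) (hall _ ⟨b, rfl⟩) (η.injective.ne (by decide))
    exact absurd (η.map_adj_iff.mp hab) (by decide)
  exact .inr ⟨_, hclique, removalDisconnects_attachments hv hr hrN⟩

/-- a pentagraph containing the Petersen graph as an induced subgraph. -/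
theorem pentagraph_contains_petersen {V : Type*} [Fintype V] (G : SimpleGraph V)
    (hG : IsPentagraph G) (h : Nonempty (petersen ↪g G)) :
    Nonempty (G ≃g petersen) ∨ HasCliqueCutset G :=
  pentagraph_contains_petersen_general G hG h
end

section
/- Let G be a triangle-free graph that has at least one edge and admits a clique cutset. Then G admits a strong parity star-cutset. -/
open SimpleGraph

variable {V : Type*}

/-
A triangle-free clique cutset `X` has at most two vertices, so for `x ∈ X` the parity condition
on `X ∖ {x}` is vacuous and `X` is a strong parity star-cutset as soon as some `x ∈ X` has a
neighbour outside `X`. Otherwise no edge leaves `X`, so `G` is disconnected, and then either end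
`c` of an edge `cd` is a cut vertex: `{c}` is a strong parity star-cutset, with the component of
`G ∖ c` containing `d`.
-/

namespace SimpleGraph

variable {G : SimpleGraph V}

lemma IsClique.subsingleton_diff_singleton (hG : G.CliqueFree 3) {X : Set V} (hX : G.IsClique X)
    {x : V} (hx : x ∈ X) : (X \ {x}).Subsingleton := by
  classical
  rintro y ⟨hy, hyx⟩ z ⟨hz, hzx⟩
  by_contra hyz
  exact hG {x, y, z} (is3Clique_triple_iff.2
    ⟨hX hx hy (Ne.symm hyx), hX hx hz (Ne.symm hzx), hX hy hz hyz⟩)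

lemma Walk.support_subset_of_adj_closed {S : Set V} (hS : ∀ u ∈ S, ∀ v, G.Adj u v → v ∈ S) :
    ∀ {u v : V} (p : G.Walk u v), u ∈ S → ∀ z ∈ p.support, z ∈ S
  | _, _, .nil, hu, z, hz => by simp_all
  | _, _, .cons h p, hu, z, hz => by
    rw [Walk.support_cons, List.mem_cons] at hz
    exact hz.elim (· ▸ hu) (support_subset_of_adj_closed hS p (hS _ hu _ h) z)

end SimpleGraph

section

variable {G : SimpleGraph V} {X : Set V}

lemma not_preconnected_of_removalDisconnects (hX : RemovalDisconnects G X)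
    (hclosed : ∀ x ∈ X, ∀ t, G.Adj x t → t ∈ X) : ¬ G.Preconnected := by
  obtain ⟨a, b, hab⟩ := hX
  intro hG
  obtain ⟨p⟩ := hG a b
  have hcompl : ∀ u ∈ Xᶜ, ∀ v, G.Adj u v → v ∈ Xᶜ := fun u hu v huv hv =>
    hu (hclosed v hv u huv.symm)
  exact hab ⟨p.induce Xᶜ (Walk.support_subset_of_adj_closed hcompl p a.2)⟩

lemma removalDisconnects_singleton_of_not_preconnected (hG : ¬ G.Preconnected) {c d : V}
    (hcd : G.Adj c d) : RemovalDisconnects G {c} := by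
  obtain ⟨v, hcv⟩ : ∃ v, ¬ G.Reachable c v := by
    by_contra! h
    exact hG fun u v => (h u).symm.trans (h v)
  have hvc : v ∉ ({c} : Set V) := by rintro rfl; exact hcv (Reachable.refl _)
  have hdc : d ∉ ({c} : Set V) := by simpa using hcd.ne'
  refine ⟨⟨d, hdc⟩, ⟨v, hvc⟩, fun hdv => hcv ?_⟩
  exact hcd.reachable.trans (hdv.map (Embedding.induce _).toHom)

lemma isCompOf_image_supp (C : (G.induce Xᶜ).ConnectedComponent) :
    IsCompOf G X (Subtype.val '' C.supp) := by
  refine ⟨C.nonempty_supp.image _, Subtype.coe_image_subset _ _, ?_, ?_⟩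
  · let f : C.toSimpleGraph →g G.induce (Subtype.val '' C.supp) :=
      ⟨fun v => ⟨v.1.1, Set.mem_image_of_mem _ v.2⟩, fun h => h⟩
    refine C.connected_toSimpleGraph.map f ?_
    rintro ⟨_, v, hv, rfl⟩
    exact ⟨⟨v, hv⟩, rfl⟩
  · rintro _ ⟨u, hu, rfl⟩ w hw huw
    exact ⟨⟨w, hw⟩, (C.mem_supp_congr_adj (v := u) (w := ⟨w, hw⟩) huw).1 hu, rfl⟩

lemma hasStrongParityStarCutset_of_subsingleton_diff {x w : V} (hX : RemovalDisconnects G X)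
    (hx : x ∈ X) (hstar : ∀ y ∈ X, y ≠ x → G.Adj x y) (hsub : (X \ {x}).Subsingleton)
    (hw : w ∉ X) (hxw : G.Adj x w) : HasStrongParityStarCutset G :=
  ⟨X, hX, x, hx, hstar, _, isCompOf_image_supp ((G.induce Xᶜ).connectedComponentMk ⟨w, hw⟩),
    fun _ hy hyx _ hz hzx hyz => absurd (hsub ⟨hy, hyx⟩ ⟨hz, hzx⟩) hyz,
    w, ⟨⟨w, hw⟩, rfl, rfl⟩, hxw⟩

end

theorem clique_cutset_gives_parity_star_cutset_general {V : Type*} (G : SimpleGraph V)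
    (htri : G.CliqueFree 3) (hedge : ∃ a b : V, G.Adj a b)
    (hcc : HasCliqueCutset G) :
    HasStrongParityStarCutset G := by
  obtain ⟨X, hXclique, hXcut⟩ := hcc
  by_cases hleaves : ∃ x ∈ X, ∃ w ∉ X, G.Adj x w
  · obtain ⟨x, hx, w, hw, hxw⟩ := hleaves
    exact hasStrongParityStarCutset_of_subsingleton_diff hXcut hx
      (fun y hy hyx => hXclique hx hy hyx.symm) (hXclique.subsingleton_diff_singleton htri hx)
      hw hxw
  · push Not at hleaves
    obtain ⟨c, d, hcd⟩ := hedge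
    have hdisc : ¬ G.Preconnected := not_preconnected_of_removalDisconnects hXcut
      fun x hx t hxt => by_contra fun ht => hleaves x hx t ht hxt
    have hdc : d ∉ ({c} : Set V) := by simpa using hcd.ne'
    exact hasStrongParityStarCutset_of_subsingleton_diff
      (removalDisconnects_singleton_of_not_preconnected hdisc hcd) rfl
      (fun y hy hyc => absurd hy hyc) (by simp) hdc hcd

/-- a triangle-free graph with an edge admitting a clique cutset admits a
strong parity star-cutset. -/
theorem clique_cutset_gives_parity_star_cutset {V : Type*} [Fintype V] (G : SimpleGraph V)
    (htri : G.CliqueFree 3) (hedge : ∃ a b : V, G.Adj a b)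
    (hcc : HasCliqueCutset G) :
    HasStrongParityStarCutset G :=
  clique_cutset_gives_parity_star_cutset_general G htri hedge hcc
end

section
/- Let G be a pentagraph, let v1-v2-v3 be an induced path of G such that G∖{v1,v2,v3} is disconnected, let A1 be the union of the vertex sets of at least one but not all components of G∖{v1,v2,v3}, and let A2 be the union of the vertex sets of the remaining components. If the induced subgraphs G[A1 ∪ {v1,v2,v3}] and G[A2 ∪ {v1,v2,v3}] both admit proper 3-colourings, then G admits a proper 3-colouring. -/
open SimpleGraph

variable {V : Type*}

/-! Normalise both colourings so that `v₁ ↦ 0` and `v₂ ↦ 1`; then `v₃` gets colour `0` or `2` on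
each side, and if these agree the colourings glue. Otherwise swap the colours `0, 2` on the Kempe
chain of `v₃` on one side; this keeps `v₁` fixed unless, on both sides, `v₃` and `v₁` lie in a
common `{0, 2}`-chain. Shortest such chains are induced paths of different parities meeting only
in `v₁, v₃`, so together they form an odd hole, which in a pentagraph has length five. -/

section InducedPaths

variable {G H : SimpleGraph V} {u v : V}

theorem SimpleGraph.Walk.one_lt_length_of_not_adj (p : G.Walk u v) (huv : u ≠ v)
    (hadj : ¬ G.Adj u v) : 1 < p.length := by
  by_contra! h
  interval_cases hp : p.length
  · exact huv (p.eq_of_length_eq_zero hp)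
  · exact hadj (p.adj_of_length_eq_one hp)

theorem SimpleGraph.Walk.isIndPath_of_length_eq_dist (p : G.Walk u v)
    (hp : p.length = G.dist u v) : IsIndPath G p := by
  refine ⟨p.isPath_of_length_eq_dist hp, ?_⟩
  have succ_of_adj : ∀ i j, i < j → j ≤ p.length →
      G.Adj (p.getVert i) (p.getVert j) → j = i + 1 := by
    intro i j hij hj hadj
    have := G.dist_le ((p.take i).append (.cons hadj (p.drop j)))
    simp only [Walk.length_append, Walk.take_length, Walk.length_cons, Walk.drop_length] at this
    omega
  intro x hx y hy hxy
  obtain ⟨i, rfl, hi⟩ := Walk.mem_support_iff_exists_getVert.mp hx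
  obtain ⟨j, rfl, hj⟩ := Walk.mem_support_iff_exists_getVert.mp hy
  rw [Walk.mk_mem_edges_iff_exists]
  rcases lt_trichotomy i j with hij | rfl | hij
  · exact ⟨i, by omega, by rw [succ_of_adj i j hij hj hxy]⟩
  · exact absurd rfl hxy.ne
  · exact ⟨j, by omega, by rw [succ_of_adj j i hij hi hxy.symm, Sym2.eq_swap]⟩

theorem SimpleGraph.Reachable.exists_isIndPath (h : G.Reachable u v) :
    ∃ p : G.Walk u v, IsIndPath G p := by
  obtain ⟨p, hp⟩ := h.exists_walk_length_eq_dist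
  exact ⟨p, p.isIndPath_of_length_eq_dist hp⟩

theorem IsIndPath.mapLe (hHG : H ≤ G) {p : H.Walk u v} (hp : IsIndPath H p)
    (hadj : ∀ x ∈ p.support, ∀ y ∈ p.support, G.Adj x y → H.Adj x y) :
    IsIndPath G (p.mapLe hHG) := by
  refine ⟨(Walk.isPath_mapLe hHG).mpr hp.1, ?_⟩
  simp only [Walk.support_mapLe_eq_support, Walk.edges_mapLe_eq_edges]
  exact fun x hx y hy hxy => hp.2 x hx y hy (hadj x hx y hy hxy)

theorem SimpleGraph.Walk.IsPath.isCycle_append_reverse {p q : G.Walk u v} (hp : p.IsPath)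
    (hq : q.IsPath) (huv : u ≠ v) (hadj : ¬ G.Adj u v)
    (hdisj : Disjoint (interiorSet p) (interiorSet q)) : (p.append q.reverse).IsCycle := by
  refine hp.isCycle_append hq.reverse ?_ (.inl (p.one_lt_length_of_not_adj huv hadj))
  have hu : u ∉ p.support.tail := by
    have := hp.support_nodup
    rw [← p.cons_tail_support, List.nodup_cons] at this
    exact this.1
  have hv : v ∉ q.reverse.support.tail := by
    have := hq.reverse.support_nodup
    rw [← q.reverse.cons_tail_support, List.nodup_cons] at this
    exact this.1
  intro x hxp hxq
  have hxu : x ≠ u := fun h => hu (h ▸ hxp)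
  have hxv : x ≠ v := fun h => hv (h ▸ hxq)
  have hxq' : x ∈ q.support := by
    simpa using List.mem_of_mem_tail hxq
  exact Set.disjoint_left.mp hdisj ⟨List.mem_of_mem_tail hxp, hxu, hxv⟩ ⟨hxq', hxu, hxv⟩

theorem IsIndPath.isIndCycle_append_reverse {p q : G.Walk u v} (hp : IsIndPath G p)
    (hq : IsIndPath G q) (huv : u ≠ v) (hadj : ¬ G.Adj u v)
    (hdisj : Disjoint (interiorSet p) (interiorSet q))
    (hanti : ∀ x ∈ interiorSet p, ∀ y ∈ interiorSet q, ¬ G.Adj x y) :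
    IsIndCycle G (p.append q.reverse) := by
  refine ⟨hp.1.isCycle_append_reverse hq.1 huv hadj hdisj, ?_⟩
  have interior_p : ∀ x ∈ p.support, x ∉ q.support → x ∈ interiorSet p := fun x hx hxq =>
    ⟨hx, fun h => hxq (h ▸ q.start_mem_support), fun h => hxq (h ▸ q.end_mem_support)⟩
  have interior_q : ∀ y ∈ q.support, y ∉ p.support → y ∈ interiorSet q := fun y hy hyp =>
    ⟨hy, fun h => hyp (h ▸ p.start_mem_support), fun h => hyp (h ▸ p.end_mem_support)⟩
  have in_p : ∀ x ∈ p.support, ∀ y ∈ p.support, G.Adj x y →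
      s(x, y) ∈ (p.append q.reverse).edges := fun x hx y hy hxy => by
    simp [hp.2 x hx y hy hxy]
  have in_q : ∀ x ∈ q.support, ∀ y ∈ q.support, G.Adj x y →
      s(x, y) ∈ (p.append q.reverse).edges := fun x hx y hy hxy => by
    simp [hq.2 x hx y hy hxy]
  intro x hx y hy hxy
  simp only [Walk.mem_support_append_iff, Walk.support_reverse, List.mem_reverse] at hx hy
  by_cases hxp : x ∈ p.support <;> by_cases hyp : y ∈ p.support
  · exact in_p x hxp y hyp hxy
  · by_cases hxq : x ∈ q.support
    · exact in_q x hxq y (hy.resolve_left hyp) hxy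
    · exact absurd hxy (hanti x (interior_p x hxp hxq) y (interior_q y (hy.resolve_left hyp) hyp))
  · by_cases hyq : y ∈ q.support
    · exact in_q x (hx.resolve_left hxp) y hyq hxy
    · exact absurd hxy.symm
        (hanti y (interior_p y hyp hyq) x (interior_q x (hx.resolve_left hxp) hxp))
  · exact in_q x (hx.resolve_left hxp) y (hy.resolve_left hyp) hxy

end InducedPaths

section Pentagraph

variable {G : SimpleGraph V} {u v : V}

theorem IsPentagraph.length_add_length_eq_five (hG : IsPentagraph G) {p q : G.Walk u v}
    (hp : IsIndPath G p) (hq : IsIndPath G q) (huv : u ≠ v) (hadj : ¬ G.Adj u v)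
    (hdisj : Disjoint (interiorSet p) (interiorSet q))
    (hanti : ∀ x ∈ interiorSet p, ∀ y ∈ interiorSet q, ¬ G.Adj x y)
    (hodd : Odd (p.length + q.length)) : p.length + q.length = 5 := by
  have := hG.2 u _ (hp.isIndCycle_append_reverse hq huv hadj hdisj hanti) (by simpa using hodd)
  simpa using this

theorem IsPentagraph.commonNeighbors_subsingleton (hG : IsPentagraph G) (huv : u ≠ v)
    (hadj : ¬ G.Adj u v) : (G.commonNeighbors u v).Subsingleton := by
  intro m hm m' hm'
  obtain ⟨hum, hvm⟩ := G.mem_commonNeighbors.mp hm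
  obtain ⟨hum', hvm'⟩ := G.mem_commonNeighbors.mp hm'
  by_contra hmm'
  have path : ∀ {m : V} (hum : G.Adj u m) (hmv : G.Adj m v),
      (Walk.cons hum (.cons hmv .nil)).IsPath := fun hum hmv => by
    simp [hum.ne, hmv.ne, huv]
  have hdisj : Disjoint (interiorSet (.cons hum (.cons hvm.symm .nil)))
      (interiorSet (.cons hum' (.cons hvm'.symm .nil))) := by
    refine Set.disjoint_left.mpr fun x ⟨hx, hxu, hxv⟩ ⟨hx', _, _⟩ => hmm' ?_
    simp only [Walk.support_cons, Walk.support_nil, List.mem_cons, List.not_mem_nil] at hx hx'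
    grind
  have := hG.1 u _
    ((path hum hvm.symm).isCycle_append_reverse (path hum' hvm'.symm) huv hadj hdisj)
  simp at this

end Pentagraph

section Kempe

variable {α : Type*} {G : SimpleGraph V} {s : Set V} {f : V → α} {a b : α} {u v : V}

def IsColoringOn (G : SimpleGraph V) (s : Set V) (f : V → α) : Prop :=
  ∀ ⦃x⦄, x ∈ s → ∀ ⦃y⦄, y ∈ s → G.Adj x y → f x ≠ f y

theorem SimpleGraph.Colorable.exists_isColoringOn {n : ℕ} (h : (G.induce s).Colorable (n + 1)) :
    ∃ f : V → Fin (n + 1), IsColoringOn G s f := by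
  classical
  obtain ⟨C⟩ := h
  refine ⟨fun x => if hx : x ∈ s then C ⟨x, hx⟩ else 0, fun x hx y hy hxy => ?_⟩
  simpa [hx, hy] using C.valid (show (G.induce s).Adj ⟨x, hx⟩ ⟨y, hy⟩ from hxy)

theorem IsColoringOn.comp_injective {β : Type*} (hf : IsColoringOn G s f) {σ : α → β}
    (hσ : Function.Injective σ) : IsColoringOn G s (σ ∘ f) :=
  fun _ hx _ hy hxy => hσ.ne (hf hx hy hxy)

theorem SimpleGraph.Colorable.exists_isColoringOn_eq_zero_eq_one
    (h : (G.induce s).Colorable 3) (hu : u ∈ s) (hv : v ∈ s) (huv : G.Adj u v) :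
    ∃ f : V → Fin 3, IsColoringOn G s f ∧ f u = 0 ∧ f v = 1 := by
  obtain ⟨f, hf⟩ := h.exists_isColoringOn
  have normalize : ∀ i j : Fin 3, i ≠ j →
      ((Equiv.swap 0 i).trans (Equiv.swap 1 (Equiv.swap 0 i j))) i = 0 ∧
      ((Equiv.swap 0 i).trans (Equiv.swap 1 (Equiv.swap 0 i j))) j = 1 := by
    decide
  exact ⟨_, hf.comp_injective (Equiv.injective _), normalize _ _ (hf hu hv huv)⟩

theorem IsColoringOn.nonempty_coloring_of_eqOn {f₁ f₂ : V → α} {X A₁ A₂ : Set V}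
    (hcover : Xᶜ ⊆ A₁ ∪ A₂) (hanti : ∀ x ∈ A₁, ∀ y ∈ A₂, ¬ G.Adj x y)
    (hf₁ : IsColoringOn G (A₁ ∪ X) f₁) (hf₂ : IsColoringOn G (A₂ ∪ X) f₂)
    (heq : Set.EqOn f₁ f₂ X) : Nonempty (G.Coloring α) := by
  classical
  have side₁ : ∀ x ∉ A₂, x ∈ A₁ ∪ X := fun x hx => by
    by_cases hX : x ∈ X
    · exact .inr hX
    · exact .inl ((hcover hX).resolve_right hx)
  have sep : ∀ x ∈ A₂, ∀ y ∉ A₂, G.Adj x y → y ∈ X := fun x hx y hy hxy =>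
    (side₁ y hy).resolve_left fun hy₁ => hanti y hy₁ x hx hxy.symm
  refine ⟨Coloring.mk (fun x => if x ∈ A₂ then f₂ x else f₁ x) fun {x y} hxy => ?_⟩
  by_cases hx : x ∈ A₂ <;> by_cases hy : y ∈ A₂ <;> simp only [hx, hy, if_true, if_false]
  · exact hf₂ (.inl hx) (.inl hy) hxy
  · rw [heq (sep x hx y hy hxy)]
    exact hf₂ (.inl hx) (.inr (sep x hx y hy hxy)) hxy
  · rw [heq (sep y hy x hx hxy.symm)]
    exact hf₂ (.inr (sep y hy x hx hxy.symm)) (.inl hy) hxy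
  · exact hf₁ (side₁ x hx) (side₁ y hy) hxy

/-- Its connected components are the Kempe chains of `f` in the colours `a` and `b`. -/
def kempeGraph (G : SimpleGraph V) (s : Set V) (f : V → α) (a b : α) : SimpleGraph V :=
  ((⊤ : G.Subgraph).induce {x | x ∈ s ∧ (f x = a ∨ f x = b)}).spanningCoe

@[simp]
theorem kempeGraph_adj {x y : V} : (kempeGraph G s f a b).Adj x y ↔
    (x ∈ s ∧ (f x = a ∨ f x = b)) ∧ (y ∈ s ∧ (f y = a ∨ f y = b)) ∧ G.Adj x y :=
  Iff.rfl

theorem kempeGraph_le : kempeGraph G s f a b ≤ G :=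
  Subgraph.spanningCoe_le _

theorem SimpleGraph.Walk.mem_kempe_of_mem_support (p : (kempeGraph G s f a b).Walk u v)
    (hu : u ∈ s ∧ (f u = a ∨ f u = b)) : ∀ x ∈ p.support, x ∈ s ∧ (f x = a ∨ f x = b) := by
  induction p with
  | nil => simpa using hu
  | cons h p ih => simpa [hu] using ih (kempeGraph_adj.mp h).2.1

theorem not_reachable_kempeGraph (huv : u ≠ v) (hv : ¬ (f v = a ∨ f v = b)) :
    ¬ (kempeGraph G s f a b).Reachable u v := by
  rintro ⟨p⟩
  cases p.reverse with
  | nil => exact huv rfl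
  | cons h _ => exact hv (kempeGraph_adj.mp h).1.2

theorem IsColoringOn.kempe_walk_even_length_iff (hf : IsColoringOn G s f)
    (p : (kempeGraph G s f a b).Walk u v) (hu : f u = a ∨ f u = b) :
    Even p.length ↔ f u = f v := by
  induction p with
  | nil => simp
  | @cons x y v h p ih =>
    obtain ⟨⟨hx, hxab⟩, ⟨hy, hyab⟩, hxy⟩ := kempeGraph_adj.mp h
    have hvab := (p.mem_kempe_of_mem_support ⟨hy, hyab⟩ v p.end_mem_support).2
    have := hf hx hy hxy
    rw [Walk.length_cons, Nat.even_add_one, ih hyab]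
    grind

theorem IsColoringOn.exists_isIndPath_of_reachable (hf : IsColoringOn G s f)
    (hu : u ∈ s ∧ (f u = a ∨ f u = b)) (h : (kempeGraph G s f a b).Reachable u v) :
    ∃ p : G.Walk u v, IsIndPath G p ∧ (∀ x ∈ p.support, x ∈ s ∧ (f x = a ∨ f x = b)) ∧
      (Even p.length ↔ f u = f v) := by
  obtain ⟨p, hp⟩ := h.exists_isIndPath
  have hK := p.mem_kempe_of_mem_support hu
  refine ⟨p.mapLe kempeGraph_le, hp.mapLe kempeGraph_le fun x hx y hy hxy =>
    kempeGraph_adj.mpr ⟨hK x hx, hK y hy, hxy⟩, ?_, ?_⟩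
  · simpa only [Walk.support_mapLe_eq_support] using hK
  · rw [Walk.length_mapLe]
    exact hf.kempe_walk_even_length_iff p hu.2

section KempeSwap

variable [DecidableEq α]

open Classical in
noncomputable def kempeSwap (G : SimpleGraph V) (s : Set V) (f : V → α) (a b : α) (r : V) :
    V → α :=
  fun x => if (kempeGraph G s f a b).Reachable r x then Equiv.swap a b (f x) else f x

theorem kempeSwap_of_reachable {r x : V} (h : (kempeGraph G s f a b).Reachable r x) :
    kempeSwap G s f a b r x = Equiv.swap a b (f x) := by
  simp [kempeSwap, h]

theorem kempeSwap_of_not_reachable {r x : V} (h : ¬ (kempeGraph G s f a b).Reachable r x) :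
    kempeSwap G s f a b r x = f x := by
  simp [kempeSwap, h]

theorem IsColoringOn.kempeSwap (hf : IsColoringOn G s f) (r : V) :
    IsColoringOn G s (kempeSwap G s f a b r) := by
  have swap_ne : ∀ c d : α, c ≠ d → ¬ ((c = a ∨ c = b) ∧ (d = a ∨ d = b)) →
      Equiv.swap a b c ≠ d := by
    intro c d hcd hab
    rw [Equiv.swap_apply_def]
    grind
  intro x hx y hy hxy
  by_cases hrx : (kempeGraph G s f a b).Reachable r x <;>
    by_cases hry : (kempeGraph G s f a b).Reachable r y
  · rw [kempeSwap_of_reachable hrx, kempeSwap_of_reachable hry]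
    exact (Equiv.injective _).ne (hf hx hy hxy)
  · rw [kempeSwap_of_reachable hrx, kempeSwap_of_not_reachable hry]
    refine swap_ne _ _ (hf hx hy hxy) fun hab => hry (hrx.trans ?_)
    exact Adj.reachable (kempeGraph_adj.mpr ⟨⟨hx, hab.1⟩, ⟨hy, hab.2⟩, hxy⟩)
  · rw [kempeSwap_of_not_reachable hrx, kempeSwap_of_reachable hry]
    refine (swap_ne _ _ (hf hy hx hxy.symm) fun hab => hrx (hry.trans ?_)).symm
    exact Adj.reachable (kempeGraph_adj.mpr ⟨⟨hy, hab.1⟩, ⟨hx, hab.2⟩, hxy.symm⟩)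
  · rw [kempeSwap_of_not_reachable hrx, kempeSwap_of_not_reachable hry]
    exact hf hx hy hxy

end KempeSwap

end Kempe

section P3Cutset

variable {G : SimpleGraph V} {s A A₁ A₂ : Set V} {f f₁ f₂ : V → Fin 3} {v₁ v₂ v₃ : V}

theorem IsColoringOn.exists_recolor_of_not_reachable (hf : IsColoringOn G s f) (hv₁ : f v₁ = 0) (hv₂ : f v₂ = 1)
    (h23 : v₂ ≠ v₃) (h : ¬ (kempeGraph G s f 0 2).Reachable v₃ v₁) :
    ∃ g, IsColoringOn G s g ∧ g v₁ = 0 ∧ g v₂ = 1 ∧ g v₃ = Equiv.swap 0 2 (f v₃) := by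
  have h₂ : ¬ (kempeGraph G s f 0 2).Reachable v₃ v₂ :=
    not_reachable_kempeGraph h23.symm (by simp [hv₂])
  exact ⟨_, hf.kempeSwap v₃, by rw [kempeSwap_of_not_reachable h, hv₁],
    by rw [kempeSwap_of_not_reachable h₂, hv₂], kempeSwap_of_reachable (.refl _)⟩

theorem IsColoringOn.exists_isIndPath_interior_subset
    (hf : IsColoringOn G (A ∪ {v₁, v₂, v₃}) f) (h23 : G.Adj v₂ v₃) (hv₂ : f v₂ = 1)
    (h : (kempeGraph G (A ∪ {v₁, v₂, v₃}) f 0 2).Reachable v₃ v₁) :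
    ∃ p : G.Walk v₃ v₁, IsIndPath G p ∧ v₂ ∉ p.support ∧ interiorSet p ⊆ A ∧
      (Even p.length ↔ f v₃ = f v₁) := by
  have hv₃ : f v₃ ≠ 1 := hv₂ ▸ hf (by simp) (by simp) h23.symm
  obtain ⟨p, hp, hK, hpar⟩ := hf.exists_isIndPath_of_reachable ⟨by simp, by omega⟩ h
  have hv₂p : v₂ ∉ p.support := fun hv => by simpa [hv₂] using (hK v₂ hv).2
  refine ⟨p, hp, hv₂p, fun x ⟨hx, hx₃, hx₁⟩ => ?_, hpar⟩
  have hx₂ : x ≠ v₂ := fun h => hv₂p (h ▸ hx)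
  simpa [hx₁, hx₂, hx₃] using (hK x hx).1

/-- Shortest Kempe chains from `v₃` to `v₁` on the two sides form a hole, which is odd if the
colours of `v₃` differ. It then has length five, so one chain is `v₃ - m - v₁` and `v₁ v₂ v₃ m`
is a 4-cycle. -/
theorem IsPentagraph.eq_of_kempeGraph_reachable (hG : IsPentagraph G)
    (h12 : G.Adj v₁ v₂) (h23 : G.Adj v₂ v₃) (h13 : ¬ G.Adj v₁ v₃) (hne : v₁ ≠ v₃)
    (hdisj : Disjoint A₁ A₂) (hanti : ∀ x ∈ A₁, ∀ y ∈ A₂, ¬ G.Adj x y)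
    (hf₁ : IsColoringOn G (A₁ ∪ {v₁, v₂, v₃}) f₁) (hf₂ : IsColoringOn G (A₂ ∪ {v₁, v₂, v₃}) f₂)
    (hf₁v₁ : f₁ v₁ = 0) (hf₁v₂ : f₁ v₂ = 1) (hf₂v₁ : f₂ v₁ = 0) (hf₂v₂ : f₂ v₂ = 1)
    (h₁ : (kempeGraph G (A₁ ∪ {v₁, v₂, v₃}) f₁ 0 2).Reachable v₃ v₁)
    (h₂ : (kempeGraph G (A₂ ∪ {v₁, v₂, v₃}) f₂ 0 2).Reachable v₃ v₁) :
    f₁ v₃ = f₂ v₃ := by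
  obtain ⟨P, hP, hPv₂, hPA, hPpar⟩ := hf₁.exists_isIndPath_interior_subset h23 hf₁v₂ h₁
  obtain ⟨Q, hQ, hQv₂, hQA, hQpar⟩ := hf₂.exists_isIndPath_interior_subset h23 hf₂v₂ h₂
  have h31 : ¬ G.Adj v₃ v₁ := fun h => h13 h.symm
  have not_two : ∀ R : G.Walk v₃ v₁, v₂ ∉ R.support → R.length ≠ 2 := fun R hR hlen =>
    hR <| hG.commonNeighbors_subsingleton hne.symm h31
      (G.walkLengthTwoEquivCommonNeighbors v₃ v₁ ⟨R, hlen⟩).2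
      (G.mem_commonNeighbors.mpr ⟨h23.symm, h12⟩) ▸ R.getVert_mem_support 1
  have hf₁v₃ : f₁ v₃ ≠ 1 := hf₁v₂ ▸ hf₁ (by simp) (by simp) h23.symm
  have hf₂v₃ : f₂ v₃ ≠ 1 := hf₂v₂ ▸ hf₂ (by simp) (by simp) h23.symm
  by_contra hne₃
  have hodd : Odd (P.length + Q.length) := by
    rw [Nat.odd_add, ← Nat.not_even_iff_odd, hPpar, hQpar, hf₁v₁, hf₂v₁]
    omega
  have h5 := hG.length_add_length_eq_five hP hQ hne.symm h31 (hdisj.mono hPA hQA)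
    (fun x hx y hy => hanti x (hPA hx) y (hQA hy)) hodd
  have := P.one_lt_length_of_not_adj hne.symm h31
  have := Q.one_lt_length_of_not_adj hne.symm h31
  have := not_two P hPv₂
  have := not_two Q hQv₂
  omega

theorem IsPentagraph.exists_isColoringOn_eqOn (hG : IsPentagraph G)
    (h12 : G.Adj v₁ v₂) (h23 : G.Adj v₂ v₃) (h13 : ¬ G.Adj v₁ v₃) (hne : v₁ ≠ v₃)
    (hdisj : Disjoint A₁ A₂) (hanti : ∀ x ∈ A₁, ∀ y ∈ A₂, ¬ G.Adj x y)
    (hf₁ : IsColoringOn G (A₁ ∪ {v₁, v₂, v₃}) f₁) (hf₂ : IsColoringOn G (A₂ ∪ {v₁, v₂, v₃}) f₂)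
    (hf₁v₁ : f₁ v₁ = 0) (hf₁v₂ : f₁ v₂ = 1) (hf₂v₁ : f₂ v₁ = 0) (hf₂v₂ : f₂ v₂ = 1) :
    ∃ g₁ g₂ : V → Fin 3, IsColoringOn G (A₁ ∪ {v₁, v₂, v₃}) g₁ ∧
      IsColoringOn G (A₂ ∪ {v₁, v₂, v₃}) g₂ ∧ Set.EqOn g₁ g₂ {v₁, v₂, v₃} := by
  by_cases heq : f₁ v₃ = f₂ v₃
  · exact ⟨f₁, f₂, hf₁, hf₂, by simp [Set.EqOn, hf₁v₁, hf₁v₂, hf₂v₁, hf₂v₂, heq]⟩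
  have hf₁v₃ : f₁ v₃ ≠ 1 := hf₁v₂ ▸ hf₁ (by simp) (by simp) h23.symm
  have hf₂v₃ : f₂ v₃ ≠ 1 := hf₂v₂ ▸ hf₂ (by simp) (by simp) h23.symm
  have swap_eq : ∀ x y : Fin 3, x ≠ 1 → y ≠ 1 → x ≠ y → Equiv.swap 0 2 x = y := by decide
  rcases not_and_or.mp fun h => heq (hG.eq_of_kempeGraph_reachable h12 h23 h13 hne hdisj
    hanti hf₁ hf₂ hf₁v₁ hf₁v₂ hf₂v₁ hf₂v₂ h.1 h.2) with h₁ | h₂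
  · obtain ⟨g₁, hg₁, hg₁v₁, hg₁v₂, hg₁v₃⟩ :=
      hf₁.exists_recolor_of_not_reachable hf₁v₁ hf₁v₂ h23.ne h₁
    refine ⟨g₁, f₂, hg₁, hf₂, ?_⟩
    simp [Set.EqOn, hg₁v₁, hg₁v₂, hg₁v₃, hf₂v₁, hf₂v₂, swap_eq _ _ hf₁v₃ hf₂v₃ heq]
  · obtain ⟨g₂, hg₂, hg₂v₁, hg₂v₂, hg₂v₃⟩ :=
      hf₂.exists_recolor_of_not_reachable hf₂v₁ hf₂v₂ h23.ne h₂
    refine ⟨f₁, g₂, hf₁, hg₂, ?_⟩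
    simp [Set.EqOn, hg₂v₁, hg₂v₂, hg₂v₃, hf₁v₁, hf₁v₂, swap_eq _ _ hf₂v₃ hf₁v₃ (Ne.symm heq)]

end P3Cutset

theorem pentagraph_glue_P3_cutset_general {V : Type*} (G : SimpleGraph V)
    (hG : IsPentagraph G) (v₁ v₂ v₃ : V)
    (h12 : G.Adj v₁ v₂) (h23 : G.Adj v₂ v₃) (h13 : ¬ G.Adj v₁ v₃) (hne : v₁ ≠ v₃)
    (A₁ A₂ : Set V)
    (hunion : A₁ ∪ A₂ = ({v₁, v₂, v₃} : Set V)ᶜ)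
    (hdisj : A₁ ∩ A₂ = ∅)
    (hanti : ∀ a ∈ A₁, ∀ b ∈ A₂, ¬ G.Adj a b)
    (hcol₁ : (G.induce (A₁ ∪ {v₁, v₂, v₃})).Colorable 3)
    (hcol₂ : (G.induce (A₂ ∪ {v₁, v₂, v₃})).Colorable 3) :
    G.Colorable 3 := by
  obtain ⟨f₁, hf₁, hf₁v₁, hf₁v₂⟩ :=
    hcol₁.exists_isColoringOn_eq_zero_eq_one (by simp) (by simp) h12
  obtain ⟨f₂, hf₂, hf₂v₁, hf₂v₂⟩ :=
    hcol₂.exists_isColoringOn_eq_zero_eq_one (by simp) (by simp) h12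
  obtain ⟨g₁, g₂, hg₁, hg₂, heq⟩ := hG.exists_isColoringOn_eqOn h12 h23 h13 hne
    (Set.disjoint_iff_inter_eq_empty.mpr hdisj) hanti hf₁ hf₂ hf₁v₁ hf₁v₂ hf₂v₁ hf₂v₂
  exact hg₁.nonempty_coloring_of_eqOn hunion.ge hanti hg₂ heq

/-- gluing 3-colourings across a P₃-cutset of a pentagraph. -/
theorem pentagraph_glue_P3_cutset {V : Type*} [Fintype V] (G : SimpleGraph V)
    (hG : IsPentagraph G) (v₁ v₂ v₃ : V)
    (h12 : G.Adj v₁ v₂) (h23 : G.Adj v₂ v₃) (h13 : ¬ G.Adj v₁ v₃) (hne : v₁ ≠ v₃)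
    (A₁ A₂ : Set V)
    (hunion : A₁ ∪ A₂ = ({v₁, v₂, v₃} : Set V)ᶜ)
    (hdisj : A₁ ∩ A₂ = ∅)
    (hne₁ : A₁.Nonempty) (hne₂ : A₂.Nonempty)
    (hanti : ∀ a ∈ A₁, ∀ b ∈ A₂, ¬ G.Adj a b)
    (hcol₁ : (G.induce (A₁ ∪ {v₁, v₂, v₃})).Colorable 3)
    (hcol₂ : (G.induce (A₂ ∪ {v₁, v₂, v₃})).Colorable 3) :
    G.Colorable 3 :=
  pentagraph_glue_P3_cutset_general G hG v₁ v₂ v₃ h12 h23 h13 hne A₁ A₂ hunion hdisj hanti hcol₁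
    hcol₂
end
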